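/- Fix the first k rows of a random ±1 matrix and suppose A' ∈ binom([n],k+1) has at least K parents A = A' \ {i} with |Per(M_A)| ≥ λ. Then after exposing a random (k+1)-th row of iid ±1 signs, P(|Per(M_{A'})| ≥ n^{1/2-c} λ) ≥ 1 - C n^{1/2-c}/√K for an absolute constant C, for any c with n^{1/2-c} ≥ 1. -/

import Mathlib

open MeasureTheory

/-- The uniform probability measure on `{-1,+1}^n` sign patterns: this models a random row of
`n` iid uniform `±1` signs. -/
noncomputable def rowMeasure (n : ℕ) : Measure (Fin n → Bool) :=
  (PMF.uniformOfFintype (Fin n → Bool)).toMeasure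

/-- The `±1` sign associated to a boolean. -/
def sgn (b : Bool) : ℝ := if b then 1 else -1

/-- `permOn M A` is the permanent of the square minor of the `m × n` matrix `M` on the columns
in `A` (and all `m` rows), when `A` has exactly `m` elements (and `0` otherwise). -/
noncomputable def permOn {m n : ℕ} (M : Matrix (Fin m) (Fin n) ℝ) (A : Finset (Fin n)) : ℝ :=
  if h : A.card = m then (Matrix.of fun r c => M r ((A.orderIsoOfFin h c : Fin n))).permanent
  else 0

/-- `extendRow M r` appends the row `r` at the bottom of the `k × n` matrix `M`. -/
def extendRow {k n : ℕ} (M : Matrix (Fin k) (Fin n) ℝ) (r : Fin n → ℝ) :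
    Matrix (Fin (k + 1)) (Fin n) ℝ :=
  Matrix.of fun p c => if h : (p : ℕ) < k then M ⟨p, h⟩ c else r c

/-!
Expanding the permanent along the new row writes `Per(M_{A'})` as the random signed sum
`∑ i ∈ A', εᵢ Per(M_{A' \ {i}})`, in which at least `K` coefficients have absolute value `≥ λ`.
Freezing the other signs, the sign patterns of those `m ≥ K` heavy coordinates that put the sum
in a fixed interval of length `2λ` form an antichain once each sign is compared with the sign of
its coefficient, so by Sperner's theorem there are at most `C(m, ⌊m/2⌋) ≤ 2^m / √m` of them
(Erdős–Littlewood–Offord). The interval `(-xλ, xλ)` with `x = n^{1/2-c} ≥ 1` is covered by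
`⌈x⌉ ≤ 2x` intervals of length `2λ`, giving the bound with `C = 2`.
-/

open Finset

namespace Matrix

variable {R : Type*} [CommSemiring R] {n : ℕ}

theorem permanent_succ_column_zero (A : Matrix (Fin (n + 1)) (Fin (n + 1)) R) :
    A.permanent = ∑ i, A i 0 * (A.submatrix i.succAbove Fin.succ).permanent := by
  rw [permanent, Finset.univ_perm_fin_succ, ← Finset.univ_product_univ]
  simp only [Finset.sum_map, Equiv.toEmbedding_apply, Finset.sum_product, Fin.prod_univ_succ,
    Equiv.Perm.decomposeFin_symm_apply_zero, Equiv.Perm.decomposeFin_symm_apply_succ,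
    ← Finset.mul_sum]
  refine Finset.sum_congr rfl fun i _ => congrArg _ ?_
  refine Fin.cases ?_ (fun i => ?_) i
  · simp [permanent]
  · rw [← permanent_permute_cols i.cycleRange, permanent]
    simp [Fin.succAbove_cycleRange]

theorem permanent_succ_row (A : Matrix (Fin (n + 1)) (Fin (n + 1)) R) (i : Fin (n + 1)) :
    A.permanent = ∑ j, A i j * (A.submatrix i.succAbove j.succAbove).permanent := by
  rw [← permanent_transpose, ← permanent_permute_rows i.cycleRange.symm,
    permanent_succ_column_zero]
  refine Finset.sum_congr rfl fun j _ => ?_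
  rw [← permanent_transpose]
  simp [Function.comp_def]

end Matrix

theorem Finset.orderEmbOfFin_erase {α : Type*} [LinearOrder α] {s : Finset α} {k : ℕ}
    (h : s.card = k + 1) (j : Fin (k + 1)) (h' : (s.erase (s.orderEmbOfFin h j)).card = k) :
    ⇑((s.erase (s.orderEmbOfFin h j)).orderEmbOfFin h') = s.orderEmbOfFin h ∘ j.succAbove :=
  (orderEmbOfFin_unique h'
    (fun _ => mem_erase.2 ⟨fun he => Fin.succAbove_ne j _ ((s.orderEmbOfFin h).injective he),
      orderEmbOfFin_mem _ _ _⟩)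
    ((s.orderEmbOfFin h).strictMono.comp (Fin.strictMono_succAbove j))).symm

theorem Finset.sum_orderEmbOfFin {α β : Type*} [LinearOrder α] [AddCommMonoid β] (s : Finset α)
    {k : ℕ} (h : s.card = k) (f : α → β) : ∑ j, f (s.orderEmbOfFin h j) = ∑ i ∈ s, f i := by
  conv_rhs => rw [← map_orderEmbOfFin_univ s h, sum_map]
  rfl

theorem permOn_eq_permanent_submatrix {m n : ℕ} (M : Matrix (Fin m) (Fin n) ℝ)
    {A : Finset (Fin n)} (h : A.card = m) :
    permOn M A = (M.submatrix id (A.orderEmbOfFin h)).permanent := by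
  rw [permOn, dif_pos h]
  rfl

@[simp] theorem extendRow_last {k n : ℕ} (M : Matrix (Fin k) (Fin n) ℝ) (r : Fin n → ℝ)
    (c : Fin n) : extendRow M r (Fin.last k) c = r c := by
  simp [extendRow]

@[simp] theorem extendRow_castSucc {k n : ℕ} (M : Matrix (Fin k) (Fin n) ℝ) (r : Fin n → ℝ)
    (p : Fin k) (c : Fin n) : extendRow M r p.castSucc c = M p c := by
  simp [extendRow]

theorem permOn_extendRow {k n : ℕ} (M : Matrix (Fin k) (Fin n) ℝ) (r : Fin n → ℝ)
    {A : Finset (Fin n)} (h : A.card = k + 1) :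
    permOn (extendRow M r) A = ∑ i ∈ A, r i * permOn M (A.erase i) := by
  rw [permOn_eq_permanent_submatrix _ h, Matrix.permanent_succ_row _ (Fin.last k),
    ← A.sum_orderEmbOfFin h]
  refine sum_congr rfl fun j _ => ?_
  have hcard : (A.erase (A.orderEmbOfFin h j)).card = k := by simp [h]
  rw [permOn_eq_permanent_submatrix _ hcard, A.orderEmbOfFin_erase h j hcard]
  simp [Matrix.submatrix]

theorem sgn_mul_eq_ite (b : Bool) (w : ℝ) :
    sgn b * w = if b = decide (0 ≤ w) then |w| else -|w| := by
  rcases le_or_gt 0 w with hw | hw <;> cases b <;>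
    simp [sgn, hw, abs_of_nonneg, abs_of_neg, not_le.2]

theorem card_filter_add_mem_Ico_le {X Y : Type*} [Fintype X] [Fintype Y] (f : X → ℝ)
    (g : Y → ℝ) {L : ℝ} {B : ℕ} (hB : ∀ a, #{x | f x ∈ Set.Ico a (a + L)} ≤ B) (a : ℝ) :
    #{p : X × Y | f p.1 + g p.2 ∈ Set.Ico a (a + L)} ≤ Fintype.card Y * B := by
  have hshift : ∀ x y, f x + g y ∈ Set.Ico a (a + L) ↔ f x ∈ Set.Ico (a - g y) (a - g y + L) :=
    fun x y => by
      simp only [Set.mem_Ico]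
      constructor <;> rintro ⟨h₁, h₂⟩ <;> constructor <;> linarith
  calc #{p : X × Y | f p.1 + g p.2 ∈ Set.Ico a (a + L)}
      = ∑ y, #{x | f x ∈ Set.Ico (a - g y) (a - g y + L)} := by
        simp only [card_filter, Fintype.sum_prod_type_right, hshift]
    _ ≤ ∑ _y : Y, B := sum_le_sum fun y _ => hB _
    _ = Fintype.card Y * B := by simp

theorem card_filter_mem_Ico_le_mul {β : Type*} [Fintype β] (f : β → ℝ) {L : ℝ} {B : ℕ}
    (hB : ∀ a, #{x | f x ∈ Set.Ico a (a + L)} ≤ B) (N : ℕ) (a : ℝ) :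
    #{x | f x ∈ Set.Ico a (a + N * L)} ≤ N * B := by
  classical
  induction N with
  | zero => simp
  | succ N ih =>
    calc #{x | f x ∈ Set.Ico a (a + ↑(N + 1) * L)}
        ≤ #(({x | f x ∈ Set.Ico a (a + N * L)} : Finset β) ∪
            ({x | f x ∈ Set.Ico (a + N * L) (a + N * L + L)} : Finset β)) := by
          refine card_le_card fun x hx => ?_
          simp only [mem_union, mem_filter, mem_univ, true_and, Set.mem_Ico] at hx ⊢
          push_cast at hx
          rcases lt_or_ge (f x) (a + N * L) with h | h
          · exact Or.inl ⟨hx.1, h⟩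
          · exact Or.inr ⟨h, by linarith⟩
      _ ≤ N * B + B := (card_union_le _ _).trans (add_le_add ih (hB _))
      _ = (N + 1) * B := by ring

section LittlewoodOfford

variable {ι : Type*} [Fintype ι] [DecidableEq ι]

theorem card_filter_sum_sgn_mul_mem_Ico_le_choose (w : ι → ℝ) {lam : ℝ} (hw : ∀ i, lam ≤ |w i|)
    (a : ℝ) :
    #{x : ι → Bool | ∑ i, sgn (x i) * w i ∈ Set.Ico a (a + 2 * lam)} ≤
      (Fintype.card ι).choose (Fintype.card ι / 2) := by
  set S : Finset (ι → Bool) := {x | ∑ i, sgn (x i) * w i ∈ Set.Ico a (a + 2 * lam)}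
  -- Enlarging `T x` raises the sum by at least `2 * lam`, so the image of `S` is an antichain.
  let T : (ι → Bool) → Finset ι := fun x => {i | x i = decide (0 ≤ w i)}
  have hT : Function.Injective T := fun x y hxy => funext fun i => by
    have := Finset.ext_iff.1 hxy i
    simp only [T, mem_filter, mem_univ, true_and] at this
    revert this
    generalize decide (0 ≤ w i) = d
    cases x i <;> cases y i <;> cases d <;> simp
  have hsum : ∀ x, ∑ i, sgn (x i) * w i = ∑ i, if i ∈ T x then |w i| else -|w i| := fun x => by
    simp [T, sgn_mul_eq_ite]
  rw [← card_image_of_injective S hT]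
  refine IsAntichain.sperner fun u hu v hv huv huv' => ?_
  simp only [coe_image, Set.mem_image, mem_coe] at hu hv
  obtain ⟨x, hx, rfl⟩ := hu
  obtain ⟨y, hy, rfl⟩ := hv
  obtain ⟨i₀, hi₀y, hi₀x⟩ := not_subset.1 fun h => huv (huv'.antisymm h)
  simp only [S, mem_filter, mem_univ, true_and, hsum, Set.mem_Ico] at hx hy
  have hgap : 2 * lam ≤ ∑ i, ((if i ∈ T y then |w i| else -|w i|) -
      (if i ∈ T x then |w i| else -|w i|)) := by
    refine le_trans ?_ (single_le_sum (fun i _ => ?_) (mem_univ i₀))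
    · simp only [hi₀y, hi₀x, if_true, if_false]
      linarith [hw i₀]
    · by_cases hx : i ∈ T x
      · simp [hx, huv' hx]
      · split_ifs <;> linarith [abs_nonneg (w i)]
  rw [sum_sub_distrib] at hgap
  linarith

theorem card_filter_sum_sgn_mul_mem_Ico_le_two_pow_mul_choose (w : ι → ℝ) {lam : ℝ} (s : Finset ι)
    (hs : ∀ i ∈ s, lam ≤ |w i|) (a : ℝ) :
    #{b : ι → Bool | ∑ i, sgn (b i) * w i ∈ Set.Ico a (a + 2 * lam)} ≤
      2 ^ (Fintype.card ι - #s) * (#s).choose (#s / 2) := by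
  let e := Equiv.piEquivPiSubtypeProd (· ∈ s) fun _ => Bool
  let f : (s → Bool) → ℝ := fun x => ∑ i, sgn (x i) * w i
  let g : ({i // i ∉ s} → Bool) → ℝ := fun y => ∑ i, sgn (y i) * w i
  have hsplit : ∀ b, ∑ i, sgn (b i) * w i = f (e b).1 + g (e b).2 := fun b => by
    convert (Fintype.sum_subtype_add_sum_subtype (· ∈ s) _).symm <;> rfl
  rw [card_equiv e (t := {p | f p.1 + g p.2 ∈ Set.Ico a (a + 2 * lam)}) fun b => by
    simp only [mem_filter, mem_univ, true_and, hsplit]]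
  refine (card_filter_add_mem_Ico_le f g (B := (#s).choose (#s / 2)) (fun a => ?_) a).trans_eq
    ?_
  · simpa only [Fintype.card_coe] using
      card_filter_sum_sgn_mul_mem_Ico_le_choose (fun i : s => w i) (fun i => hs i i.2) a
  · simp [Fintype.card_subtype_compl]

end LittlewoodOfford

theorem Nat.centralBinom_sq_mul_le (t : ℕ) : t.centralBinom ^ 2 * (2 * t + 1) ≤ 16 ^ t := by
  induction t with
  | zero => simp
  | succ t ih =>
    have hrec := Nat.succ_mul_centralBinom_succ t
    -- `(2t+1)(2t+3) ≤ (2t+2)^2` makes the ratio of consecutive terms at most `16`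
    refine Nat.le_of_mul_le_mul_left (c := (t + 1) ^ 2) ?_ (by positivity)
    calc (t + 1) ^ 2 * ((t + 1).centralBinom ^ 2 * (2 * (t + 1) + 1))
        = (2 * (2 * t + 1) * t.centralBinom) ^ 2 * (2 * t + 3) := by rw [← hrec]; ring
      _ = 4 * (2 * t + 1) * t.centralBinom ^ 2 * ((2 * t + 1) * (2 * t + 3)) := by ring
      _ ≤ 4 * (2 * t + 1) * t.centralBinom ^ 2 * (4 * (t + 1) ^ 2) :=
          Nat.mul_le_mul_left _ (by nlinarith)
      _ = 16 * (t + 1) ^ 2 * (t.centralBinom ^ 2 * (2 * t + 1)) := by ring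
      _ ≤ 16 * (t + 1) ^ 2 * 16 ^ t := by gcongr
      _ = (t + 1) ^ 2 * 16 ^ (t + 1) := by ring

theorem Nat.choose_half_sq_mul_le (m : ℕ) : m.choose (m / 2) ^ 2 * m ≤ 4 ^ m := by
  obtain ⟨t, rfl | rfl⟩ := Nat.even_or_odd' m
  · calc (2 * t).choose (2 * t / 2) ^ 2 * (2 * t) ≤ t.centralBinom ^ 2 * (2 * t + 1) := by
          rw [Nat.mul_div_cancel_left _ two_pos, Nat.centralBinom]; gcongr; omega
      _ ≤ 16 ^ t := t.centralBinom_sq_mul_le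
      _ = 4 ^ (2 * t) := by rw [pow_mul]; norm_num
  · have hc : (t + 1).centralBinom = 2 * (2 * t + 1).choose t := by
      rw [Nat.centralBinom, show 2 * (t + 1) = 2 * t + 1 + 1 by ring, Nat.choose_succ_succ',
        ← Nat.choose_symm_half t]
      ring
    have h := (t + 1).centralBinom_sq_mul_le
    have h16 : 16 ^ (t + 1) = 4 * 4 ^ (2 * t + 1) := by
      rw [pow_succ, pow_succ, pow_mul]; norm_num; ring
    rw [hc, h16] at h
    rw [show (2 * t + 1) / 2 = t by omega]
    nlinarith

theorem Nat.choose_half_mul_sqrt_le (m : ℕ) : (m.choose (m / 2) : ℝ) * √m ≤ 2 ^ m := by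
  have h : ((m.choose (m / 2) : ℝ) ^ 2 * m) ≤ (2 ^ m) ^ 2 := by
    rw [← pow_mul, mul_comm m 2, pow_mul]
    norm_num
    exact_mod_cast m.choose_half_sq_mul_le
  calc (m.choose (m / 2) : ℝ) * √m = √((m.choose (m / 2) : ℝ) ^ 2 * m) := by
        rw [Real.sqrt_mul (by positivity), Real.sqrt_sq (by positivity)]
    _ ≤ √((2 ^ m) ^ 2) := Real.sqrt_le_sqrt h
    _ = 2 ^ m := Real.sqrt_sq (by positivity)

instance isProbabilityMeasure_rowMeasure (n : ℕ) : IsProbabilityMeasure (rowMeasure n) :=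
  PMF.toMeasure.isProbabilityMeasure _

theorem rowMeasure_setOf (n : ℕ) (P : (Fin n → Bool) → Prop) [DecidablePred P] :
    rowMeasure n {b | P b} = ENNReal.ofReal (#{b | P b} / 2 ^ n) := by
  rw [rowMeasure, PMF.toMeasure_uniformOfFintype_apply _ (Set.to_countable _).measurableSet]
  simp [ENNReal.ofReal_div_of_pos]

theorem rowMeasure_sum_sgn_mul_mem_Ico_le {n : ℕ} (w : Fin n → ℝ) {lam : ℝ} (s : Finset (Fin n))
    (hs₀ : s.Nonempty) (hs : ∀ i ∈ s, lam ≤ |w i|) (N : ℕ) (a : ℝ) :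
    rowMeasure n {b | ∑ i, sgn (b i) * w i ∈ Set.Ico a (a + N * (2 * lam))} ≤
      ENNReal.ofReal (N / √(#s : ℝ)) := by
  classical
  rw [rowMeasure_setOf]
  refine ENNReal.ofReal_le_ofReal ?_
  have hcount := card_filter_mem_Ico_le_mul _
    (card_filter_sum_sgn_mul_mem_Ico_le_two_pow_mul_choose w s hs) N a
  rw [Fintype.card_fin] at hcount
  have hpow : (2 : ℝ) ^ n = 2 ^ (n - #s) * 2 ^ #s := by
    rw [← pow_add, Nat.sub_add_cancel (card_le_univ s |>.trans_eq (Fintype.card_fin n))]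
  rw [div_le_div_iff₀ (by positivity) (by simpa using hs₀.card_pos)]
  calc (#{b : Fin n → Bool | ∑ i, sgn (b i) * w i ∈ Set.Ico a (a + N * (2 * lam))} : ℝ) * √(#s : ℝ)
      ≤ (N * (2 ^ (n - #s) * (#s).choose (#s / 2)) : ℕ) * √(#s : ℝ) := by gcongr
    _ = N * 2 ^ (n - #s) * ((#s).choose (#s / 2) * √(#s : ℝ)) := by push_cast; ring
    _ ≤ N * 2 ^ (n - #s) * 2 ^ #s := by gcongr; exact (#s).choose_half_mul_sqrt_le
    _ = N * 2 ^ n := by rw [hpow, mul_assoc]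

open Classical in
/-- Growing the weight of a heavy minor: there is an absolute constant `C > 0` such that if
the set `A'` of `k+1` columns has at least `K` parents `A' \ {i}` that are `λ`-heavy for the
fixed first `k` rows `M` (with `±1` entries), and `n^{1/2-c} ≥ 1`, then after exposing a
random `(k+1)`-th row of iid uniform signs, `A'` is `n^{1/2-c} λ`-heavy with probability at
least `1 - C n^{1/2-c} / √K`. -/
theorem grow_weight_of_heavy_minor :
    ∃ C : ℝ, 0 < C ∧
      ∀ (k n K : ℕ) (c lam : ℝ) (M : Matrix (Fin k) (Fin n) ℝ)
        (A' : Finset (Fin n)),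
        0 < lam → 1 ≤ K → (1 : ℝ) ≤ (n : ℝ) ^ ((1 : ℝ) / 2 - c) →
        (∀ p q, M p q = 1 ∨ M p q = -1) →
        A'.card = k + 1 →
        K ≤ (A'.filter fun i => lam ≤ |permOn M (A'.erase i)|).card →
        1 - ENNReal.ofReal (C * (n : ℝ) ^ ((1 : ℝ) / 2 - c) / Real.sqrt K) ≤
          rowMeasure n
            {b | (n : ℝ) ^ ((1 : ℝ) / 2 - c) * lam ≤
              |permOn (extendRow M fun j => sgn (b j)) A'|} := by
  refine ⟨2, two_pos, fun k n K c lam M A' hlam hK hx _ hA' hKcard => ?_⟩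
  set x := (n : ℝ) ^ ((1 : ℝ) / 2 - c)
  set s := A'.filter fun i => lam ≤ |permOn M (A'.erase i)|
  set w : Fin n → ℝ := fun i => if i ∈ A' then permOn M (A'.erase i) else 0
  have hexpand : ∀ b : Fin n → Bool,
      permOn (extendRow M fun j => sgn (b j)) A' = ∑ i, sgn (b i) * w i := fun b => by
    simp [permOn_extendRow _ _ hA', w, mul_ite]
  have hbad : {b : Fin n → Bool | x * lam ≤ |permOn (extendRow M fun j => sgn (b j)) A'|}ᶜ ⊆
      {b | ∑ i, sgn (b i) * w i ∈ Set.Ico (-(x * lam)) (-(x * lam) + ⌈x⌉₊ * (2 * lam))} := by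
    intro b hb
    simp only [Set.mem_compl_iff, Set.mem_ofPred_eq, not_le, hexpand, abs_lt, Set.mem_Ico] at hb ⊢
    exact ⟨hb.1.le, by nlinarith [Nat.le_ceil x]⟩
  have hs : ∀ i ∈ s, lam ≤ |w i| := fun i hi => by
    simpa [w, (mem_filter.1 hi).1] using (mem_filter.1 hi).2
  have hN : (⌈x⌉₊ : ℝ) / √(#s : ℝ) ≤ 2 * x / √K := by
    have hKpos : (0 : ℝ) < √K := Real.sqrt_pos.2 (by exact_mod_cast hK)
    gcongr
    linarith [Nat.ceil_lt_add_one (zero_le_one.trans hx)]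
  calc 1 - ENNReal.ofReal (2 * x / √K)
      ≤ 1 - rowMeasure n {b | x * lam ≤ |permOn (extendRow M fun j => sgn (b j)) A'|}ᶜ := by
        refine tsub_le_tsub_left ((measure_mono hbad).trans ?_) 1
        exact (rowMeasure_sum_sgn_mul_mem_Ico_le w s (card_pos.1 (by omega)) hs _ _).trans
          (ENNReal.ofReal_le_ofReal hN)
    _ = _ := by
        rw [prob_compl_eq_one_sub (Set.to_countable _).measurableSet,
          ENNReal.sub_sub_cancel ENNReal.one_ne_top prob_le_one]
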